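/- If f*: V → W is linear and U is a maximally g-isotropic (Dirac) subspace of W ⊕ W*, then the pullback f⃖*U = {(X, f*η) : (f*X, η) ∈ U} is a maximally g-isotropic subspace of V ⊕ V*. -/

import Mathlib

open LinearMap

/-- The neutral metric `g((X,α),(Y,μ)) = (α(Y) + μ(X))/2` on `V ⊕ V*`. -/
noncomputable def neutralMetric (V : Type*) [AddCommGroup V] [Module ℝ V] :
    (V × Module.Dual ℝ V) → (V × Module.Dual ℝ V) → ℝ :=
  fun p q => (p.2 q.1 + q.2 p.1) / 2

/-- The pullback `f⃖*U = {(X, f*η) : (f*X, η) ∈ U}` of a subspace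
`U ⊆ W ⊕ W*` along a linear map `f : V → W`. -/
noncomputable def Pullback {V W : Type*} [AddCommGroup V] [Module ℝ V]
    [AddCommGroup W] [Module ℝ W] (f : V →ₗ[ℝ] W)
    (U : Submodule ℝ (W × Module.Dual ℝ W)) :
    Submodule ℝ (V × Module.Dual ℝ V) :=
  Submodule.map (LinearMap.prodMap LinearMap.id f.dualMap)
    (Submodule.comap (LinearMap.prodMap f LinearMap.id) U)

/-
Write `F = f × id : V ⊕ W* → W ⊕ W*` and `G = id × f* : V ⊕ W* → V ⊕ V*`, so that
`f⃖*U = G (F⁻¹ U)`. Since `g(G x, G y) = g(F x, F y)`, isotropy of `U` passes to the pullback.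
For the dimension, put `S = range F = im f ⊕ W*`, whose orthogonal `0 ⊕ ann(im f)` is the
injective image `F (ker G)`.
Rank–nullity gives `dim F⁻¹U = dim (U ∩ S) + dim ker f` and `dim f⃖*U = dim F⁻¹U - dim (U ∩ S^⊥)`.
A Dirac subspace satisfies `U^⊥ = U`, hence `U ∩ S^⊥ = (U + S)^⊥`, and a dimension count gives
`dim (U ∩ S) - dim (U ∩ S^⊥) = dim S - dim W = rank f`; so `dim f⃖*U = rank f + dim ker f = dim V`.
-/

open Module (finrank Dual)

lemma Submodule.finrank_map_add_finrank_inf_ker {K M N : Type*} [DivisionRing K]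
    [AddCommGroup M] [Module K M] [AddCommGroup N] [Module K N] [FiniteDimensional K M]
    (f : M →ₗ[K] N) (p : Submodule K M) :
    finrank K (p.map f) + finrank K (p ⊓ ker f : Submodule K M) = finrank K p := by
  have h := finrank_range_add_finrank_ker (f.comp p.subtype)
  rwa [range_comp, Submodule.range_subtype, ker_comp,
    ← Submodule.finrank_map_subtype_eq p (Submodule.comap p.subtype (ker f)),
    Submodule.map_comap_subtype] at h

namespace LinearMap.BilinForm

variable {K M : Type*} [Field K] [AddCommGroup M] [Module K M]

lemma orthogonal_sup (B : LinearMap.BilinForm K M) (U S : Submodule K M) :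
    B.orthogonal (U ⊔ S) = B.orthogonal U ⊓ B.orthogonal S := by
  ext x
  simp only [Submodule.mem_inf, mem_orthogonal_iff]
  refine ⟨fun h => ⟨fun u hu => h u (Submodule.mem_sup_left hu),
    fun s hs => h s (Submodule.mem_sup_right hs)⟩, ?_⟩
  rintro ⟨hU, hS⟩ _ hp
  obtain ⟨u, hu, s, hs, rfl⟩ := Submodule.mem_sup.mp hp
  rw [map_add, LinearMap.add_apply, hU u hu, hS s hs, add_zero]

variable [FiniteDimensional K M] {B : LinearMap.BilinForm K M}

lemma orthogonal_eq_self_of_isotropic (hB : B.Nondegenerate) {U : Submodule K M}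
    (hiso : ∀ p ∈ U, ∀ q ∈ U, B p q = 0) (hU : finrank K M = 2 * finrank K U) :
    B.orthogonal U = U := by
  have hle : U ≤ B.orthogonal U := fun q hq => mem_orthogonal_iff.mpr fun p hp => hiso p hp q hq
  refine (Submodule.eq_of_le_of_finrank_le hle ?_).symm
  rw [finrank_orthogonal hB]
  omega

lemma finrank_inf_add_finrank_eq_of_orthogonal_eq_self (hB : B.Nondegenerate)
    {U : Submodule K M} (hU : B.orthogonal U = U) (S : Submodule K M) :
    finrank K (U ⊓ S : Submodule K M) + finrank K U =
      finrank K S + finrank K (U ⊓ B.orthogonal S : Submodule K M) := by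
  have hdimU : finrank K M = 2 * finrank K U := by
    have hUorth := finrank_orthogonal hB U
    rw [hU] at hUorth
    have := Submodule.finrank_le U
    omega
  have hsup := finrank_orthogonal hB (U ⊔ S)
  rw [orthogonal_sup, hU] at hsup
  have hsup_inf := Submodule.finrank_sup_add_finrank_inf_eq U S
  have := Submodule.finrank_le (U ⊔ S)
  omega

end LinearMap.BilinForm

section NeutralForm

variable (K W : Type*) [Field K] [AddCommGroup W] [Module K W]

/-- Twice the neutral metric: Mathlib's `dualProd` on `W* × W`, moved to `W × W*`. -/
noncomputable def neutralForm : LinearMap.BilinForm K (W × Dual K W) :=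
  let e := LinearEquiv.prodComm K (Dual K W) W
  e.arrowCongr (e.arrowCongr (LinearEquiv.refl K K)) (dualProd K W)

variable {K W}

@[simp]
lemma neutralForm_apply (p q : W × Dual K W) : neutralForm K W p q = p.2 q.1 + q.2 p.1 := by
  simp [neutralForm, add_comm]

lemma neutralForm_nondegenerate [FiniteDimensional K W] : (neutralForm K W).Nondegenerate :=
  (nondegenerate_congr_iff _ _).mpr <|
    (isSymm_dualProd K W).isRefl.nondegenerate_iff_separatingLeft.mpr <|
      (separatingLeft_dualProd K W).mpr (Module.eval_apply_injective K)

lemma neutralForm_orthogonal_prod_top (S : Submodule K W) :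
    (neutralForm K W).orthogonal (S.prod ⊤) = (⊥ : Submodule K W).prod S.dualAnnihilator := by
  ext ⟨y, μ⟩
  simp only [BilinForm.mem_orthogonal_iff, Submodule.mem_prod, Submodule.mem_top, and_true,
    Submodule.mem_bot, Submodule.mem_dualAnnihilator, neutralForm_apply, Prod.forall]
  refine ⟨fun h => ⟨?_, fun x hx => by simpa using h x 0 hx⟩, ?_⟩
  · exact (Module.forall_dual_apply_eq_zero_iff K y).mp fun α => by simpa using h 0 α
  · rintro ⟨rfl, hμ⟩ x α hx
    simp [hμ x hx]

end NeutralForm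

section Pullback

variable {K V W : Type*} [Field K] [AddCommGroup V] [Module K V] [AddCommGroup W] [Module K W]

def IsDirac (U : Submodule K (W × Dual K W)) : Prop :=
  (∀ p ∈ U, ∀ q ∈ U, neutralForm K W p q = 0) ∧ finrank K U = finrank K W

variable (f : V →ₗ[K] W)

lemma neutralForm_prodMap_dualMap (x y : V × Dual K W) :
    neutralForm K V (id.prodMap f.dualMap x) (id.prodMap f.dualMap y) =
      neutralForm K W (f.prodMap id x) (f.prodMap id y) := by
  simp

lemma finrank_comap_prodMap_inf_ker {U : Submodule K (W × Dual K W)} [FiniteDimensional K V]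
    [FiniteDimensional K W] :
    finrank K (U.comap (f.prodMap id) ⊓ ker (id.prodMap f.dualMap) : Submodule K _) =
      finrank K (U ⊓ (neutralForm K W).orthogonal (range (f.prodMap id)) : Submodule K _) := by
  have hkerG :
      ker (id.prodMap f.dualMap) = (⊥ : Submodule K V).prod (range f).dualAnnihilator := by
    simp [ker_dualMap_eq_dualAnnihilator_range]
  have hmap : ((U.comap (f.prodMap id) ⊓ ker (id.prodMap f.dualMap))).map (f.prodMap id) =
      U ⊓ (neutralForm K W).orthogonal (range (f.prodMap id)) := by
    rw [inf_comm, ← Submodule.map_inf_eq_map_inf_comap, hkerG, range_prodMap, range_id,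
      neutralForm_orthogonal_prod_top, inf_comm]
    congr 1
    ext ⟨w, η⟩
    simp [eq_comm, and_comm]
  have hinj : U.comap (f.prodMap id) ⊓ ker (id.prodMap f.dualMap) ⊓ ker (f.prodMap id) = ⊥ := by
    rw [inf_assoc, hkerG, ker_prodMap, Submodule.prod_inf_prod]
    simp
  have hrank := Submodule.finrank_map_add_finrank_inf_ker (f.prodMap id)
    (U.comap (f.prodMap id) ⊓ ker (id.prodMap f.dualMap))
  rw [hmap, hinj, finrank_bot] at hrank
  omega

variable [FiniteDimensional K V] [FiniteDimensional K W]

lemma IsDirac.orthogonal_eq_self {U : Submodule K (W × Dual K W)} (hU : IsDirac U) :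
    (neutralForm K W).orthogonal U = U :=
  BilinForm.orthogonal_eq_self_of_isotropic neutralForm_nondegenerate hU.1 <| by
    rw [Module.finrank_prod, Subspace.dual_finrank_eq, hU.2]
    ring

lemma finrank_map_comap_prodMap {U : Submodule K (W × Dual K W)} (hU : IsDirac U) :
    finrank K ((U.comap (f.prodMap id)).map (id.prodMap f.dualMap)) = finrank K V := by
  have hmap := Submodule.finrank_map_add_finrank_inf_ker (id.prodMap f.dualMap)
    (U.comap (f.prodMap id))
  rw [finrank_comap_prodMap_inf_ker] at hmap
  set F : V × Dual K W →ₗ[K] W × Dual K W := f.prodMap id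
  have hcomap : finrank K (U ⊓ range F : Submodule K _) + finrank K (ker F) =
      finrank K (U.comap F) := by
    have := Submodule.finrank_map_add_finrank_inf_ker F (U.comap F)
    rwa [Submodule.map_comap_eq, inf_comm, inf_eq_right.mpr (ker_le_comap F)] at this
  have hF : finrank K (range F) + finrank K (ker F) = finrank K V + finrank K W := by
    rw [finrank_range_add_finrank_ker, Module.finrank_prod, Subspace.dual_finrank_eq]
  have hLagrangian := BilinForm.finrank_inf_add_finrank_eq_of_orthogonal_eq_self
    neutralForm_nondegenerate hU.orthogonal_eq_self (range F)
  have hdimU : finrank K U = finrank K W := hU.2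
  omega

theorem IsDirac.map_comap_prodMap {U : Submodule K (W × Dual K W)} (hU : IsDirac U) :
    IsDirac ((U.comap (f.prodMap id)).map (id.prodMap f.dualMap)) := by
  refine ⟨?_, finrank_map_comap_prodMap f hU⟩
  rintro _ ⟨x, hx, rfl⟩ _ ⟨y, hy, rfl⟩
  rw [neutralForm_prodMap_dualMap]
  exact hU.1 _ hx _ hy

end Pullback

lemma neutralMetric_eq_zero_iff {V : Type*} [AddCommGroup V] [Module ℝ V] (p q : V × Dual ℝ V) :
    neutralMetric V p q = 0 ↔ neutralForm ℝ V p q = 0 := by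
  simp [neutralMetric]

/-- The pullback of a maximally `g`-isotropic (Dirac) subspace of `W ⊕ W*`
along a linear map `f : V → W` is a maximally `g`-isotropic subspace of
`V ⊕ V*`. -/
theorem pullback_dirac
    (V W : Type*) [AddCommGroup V] [Module ℝ V] [FiniteDimensional ℝ V]
    [AddCommGroup W] [Module ℝ W] [FiniteDimensional ℝ W]
    (f : V →ₗ[ℝ] W) (U : Submodule ℝ (W × Module.Dual ℝ W))
    (hiso : ∀ p ∈ U, ∀ q ∈ U, neutralMetric W p q = 0)
    (hmax : Module.finrank ℝ U = Module.finrank ℝ W) :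
    (∀ p ∈ Pullback f U, ∀ q ∈ Pullback f U, neutralMetric V p q = 0) ∧
    Module.finrank ℝ (Pullback f U) = Module.finrank ℝ V := by
  have hU : IsDirac U :=
    ⟨fun p hp q hq => (neutralMetric_eq_zero_iff p q).mp (hiso p hp q hq), hmax⟩
  obtain ⟨hisoP, hmaxP⟩ := hU.map_comap_prodMap f
  exact ⟨fun p hp q hq => (neutralMetric_eq_zero_iff p q).mpr (hisoP p hp q hq), hmaxP⟩
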